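/- For every formula α of until-free propositional LTL and every natural number i, the sequent ⇒ X^i¬α ∨ X^iα (law of excluded middle, empty antecedent) is derivable in cut-free SLT_ω. -/
import Mathlib


/-- Formulas of until-free propositional LTL: propositional variables (indexed by ℕ),
implication, negation, conjunction, disjunction, G (globally), F (eventually), X (next). -/
inductive Formula : Type
  | var : ℕ → Formula
  | imp : Formula → Formula → Formula
  | neg : Formula → Formula
  | and : Formula → Formula → Formula
  | or  : Formula → Formula → Formula
  | G   : Formula → Formula
  | F   : Formula → Formula
  | X   : Formula → Formula
deriving DecidableEq

/-- `Xpow i α` is `X^i α`: `X^0 α = α`, `X^{n+1} α = X^n (X α)`. -/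
def Xpow : ℕ → Formula → Formula
  | 0, α => α
  | n + 1, α => Xpow n (Formula.X α)

/-- The single-succedent sequent calculus SLT_ω on sequents `Γ ⇒ γ` where `Γ` is a finite
set of formulas and `γ` is a formula (`some γ`) or empty (`none`). The boolean parameter
records whether the rule (cut) is allowed: `SLT true` is full SLT_ω, `SLT false` is
cut-free SLT_ω. -/
inductive SLT : Bool → Finset Formula → Option Formula → Prop
  | id (c : Bool) (i p : ℕ) (Γ : Finset Formula) :
      SLT c (insert (Xpow i (Formula.var p)) Γ) (some (Xpow i (Formula.var p)))
  | cut {c : Bool} {Γ Θ : Finset Formula} {α : Formula} {γ : Option Formula} :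
      c = true → SLT c Γ (some α) → SLT c (insert α Θ) γ → SLT c (Γ ∪ Θ) γ
  | weR {c : Bool} {Γ : Finset Formula} (α : Formula) :
      SLT c Γ none → SLT c Γ (some α)
  | impL {c : Bool} {Γ : Finset Formula} {γ : Option Formula} (i : ℕ) (α β : Formula) :
      SLT c Γ (some (Xpow i α)) → SLT c (insert (Xpow i β) Γ) γ →
      SLT c (insert (Xpow i (Formula.imp α β)) Γ) γ
  | impR {c : Bool} {Γ : Finset Formula} (i : ℕ) (α β : Formula) :
      SLT c (insert (Xpow i α) Γ) (some (Xpow i β)) →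
      SLT c Γ (some (Xpow i (Formula.imp α β)))
  | negL {c : Bool} {Γ : Finset Formula} (i : ℕ) (α : Formula) :
      SLT c Γ (some (Xpow i α)) → SLT c (insert (Xpow i (Formula.neg α)) Γ) none
  | negR {c : Bool} {Γ : Finset Formula} (i : ℕ) (α : Formula) :
      SLT c (insert (Xpow i α) Γ) none → SLT c Γ (some (Xpow i (Formula.neg α)))
  | exM {c : Bool} {Γ : Finset Formula} {γ : Option Formula} (i : ℕ) (α : Formula) :
      SLT c (insert (Xpow i (Formula.neg α)) Γ) γ → SLT c (insert (Xpow i α) Γ) γ →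
      SLT c Γ γ
  | andL {c : Bool} {Γ : Finset Formula} {γ : Option Formula} (i : ℕ) (α β : Formula) :
      SLT c (insert (Xpow i α) (insert (Xpow i β) Γ)) γ →
      SLT c (insert (Xpow i (Formula.and α β)) Γ) γ
  | andR {c : Bool} {Γ : Finset Formula} (i : ℕ) (α β : Formula) :
      SLT c Γ (some (Xpow i α)) → SLT c Γ (some (Xpow i β)) →
      SLT c Γ (some (Xpow i (Formula.and α β)))
  | orL {c : Bool} {Γ : Finset Formula} {γ : Option Formula} (i : ℕ) (α β : Formula) :
      SLT c (insert (Xpow i α) Γ) γ → SLT c (insert (Xpow i β) Γ) γ →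
      SLT c (insert (Xpow i (Formula.or α β)) Γ) γ
  | orR1 {c : Bool} {Γ : Finset Formula} (i : ℕ) (α β : Formula) :
      SLT c Γ (some (Xpow i α)) → SLT c Γ (some (Xpow i (Formula.or α β)))
  | orR2 {c : Bool} {Γ : Finset Formula} (i : ℕ) (α β : Formula) :
      SLT c Γ (some (Xpow i β)) → SLT c Γ (some (Xpow i (Formula.or α β)))
  | GL {c : Bool} {Γ : Finset Formula} {γ : Option Formula} (i k : ℕ) (α : Formula) :
      SLT c (insert (Xpow (i + k) α) Γ) γ → SLT c (insert (Xpow i (Formula.G α)) Γ) γ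
  | GR {c : Bool} {Γ : Finset Formula} (i : ℕ) (α : Formula) :
      (∀ j : ℕ, SLT c Γ (some (Xpow (i + j) α))) → SLT c Γ (some (Xpow i (Formula.G α)))
  | FL {c : Bool} {Γ : Finset Formula} {γ : Option Formula} (i : ℕ) (α : Formula) :
      (∀ j : ℕ, SLT c (insert (Xpow (i + j) α) Γ) γ) →
      SLT c (insert (Xpow i (Formula.F α)) Γ) γ
  | FR {c : Bool} {Γ : Finset Formula} (i k : ℕ) (α : Formula) :
      SLT c Γ (some (Xpow (i + k) α)) → SLT c Γ (some (Xpow i (Formula.F α)))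

lemma Xpow_X (i : ℕ) (α : Formula) : Xpow i (Formula.X α) = Xpow (i + 1) α := by
  induction i generalizing α with
  | zero => rfl
  | succ n ih => exact ih (Formula.X α)

lemma SLT.ident (α : Formula) : ∀ (i : ℕ) (Γ : Finset Formula),
    SLT false (insert (Xpow i α) Γ) (some (Xpow i α)) := by
  induction α with
  | var p => intro i Γ; exact SLT.id false i p Γ
  | imp α β ihα ihβ =>
      intro i Γ
      apply SLT.impR i
      rw [Finset.insert_comm]
      apply SLT.impL i
      · exact ihα i Γ
      · exact ihβ i (insert (Xpow i α) Γ)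
  | neg α ihα =>
      intro i Γ
      apply SLT.negR i
      rw [Finset.insert_comm]
      apply SLT.negL i
      exact ihα i Γ
  | and α β ihα ihβ =>
      intro i Γ
      apply SLT.andR i
      · apply SLT.andL i
        exact ihα i (insert (Xpow i β) Γ)
      · apply SLT.andL i
        rw [Finset.insert_comm]
        exact ihβ i (insert (Xpow i α) Γ)
  | or α β ihα ihβ =>
      intro i Γ
      apply SLT.orL i
      · exact SLT.orR1 i α β (ihα i Γ)
      · exact SLT.orR2 i α β (ihβ i Γ)
  | G α ihα =>
      intro i Γ
      apply SLT.GR i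
      intro j
      exact SLT.GL i j α (ihα (i + j) Γ)
  | F α ihα =>
      intro i Γ
      apply SLT.FL i
      intro j
      exact SLT.FR i j α (ihα (i + j) Γ)
  | X α ihα =>
      intro i Γ
      rw [Xpow_X]
      exact ihα (i + 1) Γ

/-- For every formula `α` and natural number `i`, the sequent `⇒ X^i¬α ∨ X^iα` (law of
excluded middle) is derivable in cut-free SLT_ω. -/
theorem stmt12 (α : Formula) (i : ℕ) :
    SLT false ∅ (some (Formula.or (Xpow i (Formula.neg α)) (Xpow i α))) := by
  apply SLT.exM i α
  · exact SLT.orR1 0 (Xpow i (Formula.neg α)) (Xpow i α) (SLT.ident (Formula.neg α) i ∅)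
  · exact SLT.orR2 0 (Xpow i (Formula.neg α)) (Xpow i α) (SLT.ident α i ∅)
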